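/- Let (𝔤, ω) be a symplectic Lie algebra and consider the left symmetric product on 𝒟 := 𝔤 × 𝔤* given by (x,α)(y,β) := (xy + ad*_α y, αβ + ad*_x β). Then the trace of the right multiplication R_u : v ↦ vu on 𝒟 vanishes for every u ∈ 𝒟 if and only if 𝔤 is unimodular, i.e. tr(ad_x) = 0 for all x ∈ 𝔤. -/

import Mathlib

/-!
Split the right multiplication `R_(x,α)` of `𝔤 × 𝔤*` into blocks. Only the diagonal blocks
contribute to the trace, and up to a cyclic permutation both are of the form `r ∘ (y ↦ ad*_y α')`.
Closedness of `ω` says that `ω : 𝔤 → 𝔤*` is a 1-cocycle for the coadjoint action, so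
`ad*_y (ω a) = -ω (ad_a y) - (ad_a)ᵀ (ω y)`, and `r ∘ (y ↦ ad*_y (ω a))` has trace `-2 tr ad_a`.
Hence `tr R_(x,α) = -2 (tr ad_x + tr ad_(r α))`, which vanishes for all `(x, α)` iff `𝔤` is
unimodular.
-/

/-- The coadjoint action of `x : L` on the dual: `⟨coad x α, y⟩ = -⟨α, [x,y]⟩`. -/
noncomputable def coad {L : Type*} [LieRing L] [LieAlgebra ℝ L]
    (x : L) (α : Module.Dual ℝ L) : Module.Dual ℝ L :=
  -(α ∘ₗ (LieAlgebra.ad ℝ L x))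

/-- The product `(x,α)(y,β) = (xy + ad*_α y, αβ + ad*_x β)` on `𝒟 = 𝔤 × 𝔤*`. -/
noncomputable def dprod {L : Type*} [LieRing L] [LieAlgebra ℝ L]
    (p : L →ₗ[ℝ] L →ₗ[ℝ] L) (r : Module.Dual ℝ L →ₗ[ℝ] L)
    (cstar : Module.Dual ℝ L → L → L)
    (u v : L × Module.Dual ℝ L) : L × Module.Dual ℝ L :=
  (p u.1 v.1 + cstar u.2 v.1, coad (r u.2) v.2 + coad u.1 v.2)

namespace LinearMap

theorem trace_prod_eq_add_diagonal_blocks {R M N : Type*} [CommRing R]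
    [AddCommGroup M] [Module R M] [Module.Free R M] [Module.Finite R M]
    [AddCommGroup N] [Module R N] [Module.Free R N] [Module.Finite R N]
    (f : M × N →ₗ[R] M × N) :
    trace R (M × N) f =
      trace R M (fst R M N ∘ₗ f ∘ₗ inl R M N) + trace R N (snd R M N ∘ₗ f ∘ₗ inr R M N) := by
  have hid : inl R M N ∘ₗ fst R M N + inr R M N ∘ₗ snd R M N = id := by
    ext <;> simp
  conv_lhs => rw [← comp_id f, ← hid]
  rw [comp_add, map_add, ← comp_assoc, ← comp_assoc, trace_comp_comm' (fst R M N),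
    trace_comp_comm' (snd R M N)]

end LinearMap

open LinearMap LieAlgebra Module

section

variable {L : Type*} [LieRing L] [LieAlgebra ℝ L]

@[simp] theorem coad_apply (x : L) (α : Dual ℝ L) (z : L) : coad x α z = -α ⁅x, z⁆ := rfl

noncomputable def coadOrbitMap (α : Dual ℝ L) : L →ₗ[ℝ] Dual ℝ L :=
  -(llcomp ℝ L L ℝ α ∘ₗ (ad ℝ L : L →ₗ[ℝ] End ℝ L))

@[simp] theorem coadOrbitMap_apply (α : Dual ℝ L) (y : L) : coadOrbitMap α y = coad y α := rfl

theorem omega_lie_eq_coad_sub_coad (ω : L →ₗ[ℝ] Dual ℝ L) (hskew : ∀ x y : L, ω x y = - ω y x)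
    (hclosed : ∀ x y z : L, ω ⁅x, y⁆ z + ω ⁅y, z⁆ x + ω ⁅z, x⁆ y = 0) (x y : L) :
    ω ⁅x, y⁆ = coad x (ω y) - coad y (ω x) := by
  ext z
  have := hclosed x y z
  rw [hskew ⁅y, z⁆, hskew ⁅z, x⁆, ← lie_skew z x, map_neg] at this
  simp only [LinearMap.sub_apply, coad_apply]
  linarith

theorem coadOrbitMap_omega (ω : L →ₗ[ℝ] Dual ℝ L) (hskew : ∀ x y : L, ω x y = - ω y x)
    (hclosed : ∀ x y z : L, ω ⁅x, y⁆ z + ω ⁅y, z⁆ x + ω ⁅z, x⁆ y = 0) (a : L) :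
    coadOrbitMap (ω a) = -(ω ∘ₗ ad ℝ L a) - (ad ℝ L a).dualMap ∘ₗ ω := by
  ext y z
  have h := congrArg (· z) (omega_lie_eq_coad_sub_coad ω hskew hclosed y a)
  simp only [LinearMap.sub_apply, coad_apply] at h
  simp only [coadOrbitMap_apply, coad_apply, LinearMap.sub_apply, LinearMap.neg_apply,
    comp_apply, dualMap_apply', ad_apply]
  rw [← lie_skew a y, map_neg, LinearMap.neg_apply]
  linarith

variable [FiniteDimensional ℝ L]

theorem trace_comp_coadOrbitMap (ω : L →ₗ[ℝ] Dual ℝ L) (hskew : ∀ x y : L, ω x y = - ω y x)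
    (hclosed : ∀ x y z : L, ω ⁅x, y⁆ z + ω ⁅y, z⁆ x + ω ⁅z, x⁆ y = 0)
    (r : Dual ℝ L →ₗ[ℝ] L) (hr1 : ∀ α : Dual ℝ L, ω (r α) = α) (hr2 : ∀ x : L, r (ω x) = x)
    (α : Dual ℝ L) :
    trace ℝ L (r ∘ₗ coadOrbitMap α) = -2 * trace ℝ L (ad ℝ L (r α)) := by
  have hrω : r ∘ₗ ω = LinearMap.id := by ext x; exact hr2 x
  have hωr : ω ∘ₗ r = LinearMap.id := by ext α : 1; exact hr1 α
  have h := coadOrbitMap_omega ω hskew hclosed (r α)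
  rw [hr1] at h
  rw [h, comp_sub, comp_neg, map_sub, map_neg, ← comp_assoc, hrω, id_comp,
    trace_comp_comm' ((ad ℝ L (r α)).dualMap ∘ₗ ω), comp_assoc, hωr, comp_id, dualMap_def,
    trace_transpose']
  ring

theorem fst_dprod_mk_zero (ω : L →ₗ[ℝ] Dual ℝ L) (r : Dual ℝ L →ₗ[ℝ] L)
    (hr2 : ∀ x : L, r (ω x) = x) (p : L →ₗ[ℝ] L →ₗ[ℝ] L)
    (hp : ∀ x y z : L, ω (p x y) z = -(ω y ⁅x, z⁆))
    (cstar : Dual ℝ L → L → L)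
    (hcstar : ∀ (α : Dual ℝ L) (x : L) (β : Dual ℝ L), β (cstar α x) = -((ω ⁅r α, r β⁆) x))
    (x y : L) (α : Dual ℝ L) :
    (dprod p r cstar (y, 0) (x, α)).1 = r (coadOrbitMap (ω x) y) := by
  have hcstar0 : cstar 0 x = 0 :=
    (forall_dual_apply_eq_zero_iff ℝ _).mp fun β ↦ by simp [hcstar]
  have hpω : ω (p y x) = coadOrbitMap (ω x) y := by
    ext z; simp [hp]
  rw [dprod, hcstar0, add_zero, ← hpω, hr2]

theorem trace_eq_of_apply_eq_dprod_right (ω : L →ₗ[ℝ] Dual ℝ L)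
    (hskew : ∀ x y : L, ω x y = - ω y x)
    (hclosed : ∀ x y z : L, ω ⁅x, y⁆ z + ω ⁅y, z⁆ x + ω ⁅z, x⁆ y = 0)
    (r : Dual ℝ L →ₗ[ℝ] L) (hr1 : ∀ α : Dual ℝ L, ω (r α) = α) (hr2 : ∀ x : L, r (ω x) = x)
    (p : L →ₗ[ℝ] L →ₗ[ℝ] L) (hp : ∀ x y z : L, ω (p x y) z = -(ω y ⁅x, z⁆))
    (cstar : Dual ℝ L → L → L)
    (hcstar : ∀ (α : Dual ℝ L) (x : L) (β : Dual ℝ L), β (cstar α x) = -((ω ⁅r α, r β⁆) x))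
    (x : L) (α : Dual ℝ L) (f : L × Dual ℝ L →ₗ[ℝ] L × Dual ℝ L)
    (hf : ∀ v, f v = dprod p r cstar v (x, α)) :
    trace ℝ (L × Dual ℝ L) f =
      -2 * trace ℝ L (ad ℝ L x) - 2 * trace ℝ L (ad ℝ L (r α)) := by
  have hL : fst ℝ L (Dual ℝ L) ∘ₗ f ∘ₗ inl ℝ L (Dual ℝ L) = r ∘ₗ coadOrbitMap (ω x) := by
    ext y
    simp only [comp_apply, inl_apply, fst_apply, hf]
    exact fst_dprod_mk_zero ω r hr2 p hp cstar hcstar x y α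
  have hD : snd ℝ L (Dual ℝ L) ∘ₗ f ∘ₗ inr ℝ L (Dual ℝ L) = coadOrbitMap α ∘ₗ r := by
    ext β
    simp [hf, dprod]
  rw [trace_prod_eq_add_diagonal_blocks, hL, hD, trace_comp_comm' r,
    trace_comp_coadOrbitMap ω hskew hclosed r hr1 hr2,
    trace_comp_coadOrbitMap ω hskew hclosed r hr1 hr2, hr2]
  ring

end

/-- for the left symmetric product on `𝒟 = 𝔤 × 𝔤*` of a symplectic Lie
algebra, all right multiplications `R_u : v ↦ vu` have zero trace iff `𝔤` is
unimodular. -/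
theorem stmt15 {L : Type*} [LieRing L] [LieAlgebra ℝ L] [FiniteDimensional ℝ L]
    (ω : L →ₗ[ℝ] Module.Dual ℝ L)
    (hskew : ∀ x y : L, ω x y = - ω y x)
    (hclosed : ∀ x y z : L, ω ⁅x, y⁆ z + ω ⁅y, z⁆ x + ω ⁅z, x⁆ y = 0)
    (r : Module.Dual ℝ L →ₗ[ℝ] L)
    (hr1 : ∀ α : Module.Dual ℝ L, ω (r α) = α)
    (hr2 : ∀ x : L, r (ω x) = x)
    (p : L →ₗ[ℝ] L →ₗ[ℝ] L)
    (hp : ∀ x y z : L, ω (p x y) z = -(ω y ⁅x, z⁆))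
    (cstar : Module.Dual ℝ L → L → L)
    (hcstar : ∀ (α : Module.Dual ℝ L) (x : L) (β : Module.Dual ℝ L),
      β (cstar α x) = -((ω ⁅r α, r β⁆) x))
    (Rf : L × Module.Dual ℝ L → ((L × Module.Dual ℝ L) →ₗ[ℝ] (L × Module.Dual ℝ L)))
    (hRf : ∀ u v : L × Module.Dual ℝ L, Rf u v = dprod p r cstar v u) :
    (∀ u : L × Module.Dual ℝ L, LinearMap.trace ℝ (L × Module.Dual ℝ L) (Rf u) = 0) ↔
    (∀ x : L, LinearMap.trace ℝ L (LieAlgebra.ad ℝ L x) = 0) := by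
  have htrace (x : L) (α : Dual ℝ L) :
      trace ℝ (L × Dual ℝ L) (Rf (x, α)) =
        -2 * trace ℝ L (ad ℝ L x) - 2 * trace ℝ L (ad ℝ L (r α)) :=
    trace_eq_of_apply_eq_dprod_right ω hskew hclosed r hr1 hr2 p hp cstar hcstar x α _
      (hRf (x, α))
  constructor
  · intro h x
    have hx := htrace x 0
    rw [h, map_zero, map_zero, map_zero] at hx
    linarith
  · rintro h ⟨x, α⟩
    rw [htrace, h, h]
    ring
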